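/- In the lower-bound graph with input edges, if S_A[i] = 0 or S_B[i] = 0, then the distance between ℓ'_i and r'_i is at most 4P + 2t + 2. -/

import Mathlib

/-! The lower-bound graph construction used to prove lower bounds for
`t`-round proof-labeling schemes for the diameter predicate.

The graph has base nodes `ℓ_0, …, ℓ_{k+1}`, `ℓ'_0, …, ℓ'_{k-1}`, `t_h`, `f_h`
(`h < log k`) on the left, and symmetric nodes on the right. Base nodes are
connected by paths (whose interior nodes are fresh): `P`-paths connect
`ℓ_i–ℓ'_i`, `ℓ_i–ℓ_k`, `ℓ_k–ℓ_{k+1}`, `ℓ_{k+1}–t_h`, `ℓ_{k+1}–f_h`, and `ℓ_i`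
to the nodes encoding its binary representation (`t_h` if bit `h` of `i` is 1,
`f_h` otherwise); symmetrically on the right. `(2t+1)`-paths connect `t_h–f'_h`,
`f_h–t'_h` and `ℓ_{k+1}–r_{k+1}`. Finally, the input edge `(ℓ_i, ℓ_{k+1})` is
present iff `S_A[i] = 0`, and `(r_i, r_{k+1})` iff `S_B[i] = 0`. -/

/-- The base (named) nodes of the construction. `L i` is `ℓ_i` for `i < k`,
`Lk` is `ℓ_k`, `Lk1` is `ℓ_{k+1}`, `L' i` is `ℓ'_i`, `Tl h` is `t_h`,
`Fl h` is `f_h`; similarly on the right. -/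
inductive LBBase (k lk : ℕ) : Type
  | L (i : Fin k) | L' (i : Fin k) | Lk | Lk1 | Tl (h : Fin lk) | Fl (h : Fin lk)
  | R (i : Fin k) | R' (i : Fin k) | Rk | Rk1 | Tr (h : Fin lk) | Fr (h : Fin lk)

/-- Names for the connecting paths (and the two families of input edges). -/
inductive LBEdge (k lk : ℕ) : Type
  | ll' (i : Fin k) | llk (i : Fin k) | lklk1
  | lk1t (h : Fin lk) | lk1f (h : Fin lk) | lenc (i : Fin k) (h : Fin lk)
  | rr' (i : Fin k) | rrk (i : Fin k) | rkrk1
  | rk1t (h : Fin lk) | rk1f (h : Fin lk) | renc (i : Fin k) (h : Fin lk)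
  | cr1 (h : Fin lk) | cr2 (h : Fin lk) | crC
  | inA (i : Fin k) | inB (i : Fin k)

namespace LB

variable {k lk : ℕ}

/-- The two endpoints of each connecting path. -/
def ends : LBEdge k lk → LBBase k lk × LBBase k lk
  | .ll' i => (.L i, .L' i)
  | .llk i => (.L i, .Lk)
  | .lklk1 => (.Lk, .Lk1)
  | .lk1t h => (.Lk1, .Tl h)
  | .lk1f h => (.Lk1, .Fl h)
  | .lenc i h => (.L i, if Nat.testBit i.val h.val then .Tl h else .Fl h)
  | .rr' i => (.R i, .R' i)
  | .rrk i => (.R i, .Rk)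
  | .rkrk1 => (.Rk, .Rk1)
  | .rk1t h => (.Rk1, .Tr h)
  | .rk1f h => (.Rk1, .Fr h)
  | .renc i h => (.R i, if Nat.testBit i.val h.val then .Tr h else .Fr h)
  | .cr1 h => (.Tl h, .Fr h)
  | .cr2 h => (.Fl h, .Tr h)
  | .crC => (.Lk1, .Rk1)
  | .inA i => (.L i, .Lk1)
  | .inB i => (.R i, .Rk1)

/-- The number of edges of each connecting path: `2t+1` for the three
cross families, `1` for the input edges, and `P` for all others. -/
def elen (P t : ℕ) : LBEdge k lk → ℕ
  | .cr1 _ => 2 * t + 1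
  | .cr2 _ => 2 * t + 1
  | .crC => 2 * t + 1
  | .inA _ => 1
  | .inB _ => 1
  | _ => P

/-- Which connecting paths are present: all of them, except that the input edge
`(ℓ_i, ℓ_{k+1})` is present iff `S_A[i] = 0`, and `(r_i, r_{k+1})` iff `S_B[i] = 0`. -/
def active (SA SB : Fin k → Bool) : LBEdge k lk → Prop
  | .inA i => SA i = false
  | .inB i => SB i = false
  | _ => True

/-- The vertices of the lower-bound graph: base nodes, plus the interior
nodes of the connecting paths (a path with `m` edges has `m - 1` interior
nodes, numbered consecutively from its first endpoint). -/
def Vtx (k lk P t : ℕ) : Type :=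
  LBBase k lk ⊕ (Σ e : LBEdge k lk, Fin (elen P t e - 1))

/-- One direction of the adjacency relation of the lower-bound graph. -/
def Rel (k lk P t : ℕ) (SA SB : Fin k → Bool) : Vtx k lk P t → Vtx k lk P t → Prop :=
  fun x y =>
    (∃ e : LBEdge k lk, active SA SB e ∧ elen P t e = 1 ∧
        x = Sum.inl (ends e).1 ∧ y = Sum.inl (ends e).2) ∨
    (∃ (e : LBEdge k lk) (j : Fin (elen P t e - 1)), active SA SB e ∧
        x = Sum.inl (ends e).1 ∧ y = Sum.inr ⟨e, j⟩ ∧ j.val = 0) ∨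
    (∃ (e : LBEdge k lk) (j : Fin (elen P t e - 1)), active SA SB e ∧
        x = Sum.inr ⟨e, j⟩ ∧ y = Sum.inl (ends e).2 ∧ j.val + 2 = elen P t e) ∨
    (∃ (e : LBEdge k lk) (j j' : Fin (elen P t e - 1)), active SA SB e ∧
        x = Sum.inr ⟨e, j⟩ ∧ y = Sum.inr ⟨e, j'⟩ ∧ j'.val = j.val + 1)

/-- The lower-bound graph. -/
def graph (k lk P t : ℕ) (SA SB : Fin k → Bool) : SimpleGraph (Vtx k lk P t) :=
  SimpleGraph.fromRel (Rel k lk P t SA SB)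

end LB

namespace SimpleGraph

lemma edist_le_add_of_le {V : Type*} {G : SimpleGraph V} {u v w : V} {a b : ℕ∞}
    (huv : G.edist u v ≤ a) (hvw : G.edist v w ≤ b) : G.edist u w ≤ a + b :=
  G.edist_triangle.trans (add_le_add huv hvw)

end SimpleGraph

namespace LB

variable {k lk : ℕ}

lemma ends_fst_ne_snd (e : LBEdge k lk) : (ends e).1 ≠ (ends e).2 := by
  cases e <;> simp only [ends] <;> (try split) <;> simp

variable {P t : ℕ} {SA SB : Fin k → Bool} {e : LBEdge k lk}

open SimpleGraph

lemma adj_ends_of_elen_eq_one (he : active SA SB e) (h1 : elen P t e = 1) :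
    (graph k lk P t SA SB).Adj (.inl (ends e).1) (.inl (ends e).2) :=
  (fromRel_adj _ _ _).2
    ⟨fun h => ends_fst_ne_snd e (Sum.inl.inj h), .inl (.inl ⟨e, he, h1, rfl, rfl⟩)⟩

lemma adj_fst_interior (he : active SA SB e) (j : Fin (elen P t e - 1)) (hj : j.val = 0) :
    (graph k lk P t SA SB).Adj (.inl (ends e).1) (.inr ⟨e, j⟩) :=
  (fromRel_adj _ _ _).2 ⟨Sum.inl_ne_inr, .inl (.inr (.inl ⟨e, j, he, rfl, rfl, hj⟩))⟩

lemma adj_interior_snd (he : active SA SB e) (j : Fin (elen P t e - 1))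
    (hj : j.val + 2 = elen P t e) :
    (graph k lk P t SA SB).Adj (.inr ⟨e, j⟩) (.inl (ends e).2) :=
  (fromRel_adj _ _ _).2 ⟨Sum.inr_ne_inl, .inl (.inr (.inr (.inl ⟨e, j, he, rfl, rfl, hj⟩)))⟩

lemma adj_interior_succ (he : active SA SB e) (j j' : Fin (elen P t e - 1))
    (hj : j'.val = j.val + 1) :
    (graph k lk P t SA SB).Adj (.inr ⟨e, j⟩) (.inr ⟨e, j'⟩) := by
  refine (fromRel_adj _ _ _).2 ⟨?_, .inl (.inr (.inr (.inr ⟨e, j, j', he, rfl, rfl, hj⟩)))⟩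
  rintro ⟨⟩
  omega

lemma edist_fst_interior_le (he : active SA SB e) (j : Fin (elen P t e - 1)) :
    (graph k lk P t SA SB).edist (.inl (ends e).1) (.inr ⟨e, j⟩) ≤ j.val + 1 := by
  obtain ⟨n, hn⟩ := j
  induction n with
  | zero => exact (edist_eq_one_iff_adj.2 (adj_fst_interior he _ rfl)).le
  | succ n ih =>
    calc _ ≤ _ := SimpleGraph.edist_triangle
      _ ≤ (n + 1 : ℕ∞) + 1 :=
          add_le_add (ih (by omega))
            (edist_eq_one_iff_adj.2 (adj_interior_succ he ⟨n, by omega⟩ ⟨n + 1, hn⟩ rfl)).le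
      _ = _ := by push_cast; rfl

lemma edist_ends_le (he : active SA SB e) (hm : 1 ≤ elen P t e) :
    (graph k lk P t SA SB).edist (.inl (ends e).1) (.inl (ends e).2) ≤ elen P t e := by
  by_cases h1 : elen P t e = 1
  · rw [h1]
    exact (edist_eq_one_iff_adj.2 (adj_ends_of_elen_eq_one he h1)).le
  · have hj : elen P t e - 2 < elen P t e - 1 := by omega
    calc _ ≤ _ := SimpleGraph.edist_triangle
      _ ≤ ((elen P t e - 2 + 1 : ℕ) : ℕ∞) + 1 :=
          add_le_add (edist_fst_interior_le he ⟨_, hj⟩)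
            (edist_eq_one_iff_adj.2 (adj_interior_snd he ⟨_, hj⟩ (by dsimp only; omega))).le
      _ = (elen P t e : ℕ∞) := by norm_cast; omega

lemma edist_ends_le' (he : active SA SB e) (hm : 1 ≤ elen P t e) :
    (graph k lk P t SA SB).edist (.inl (ends e).2) (.inl (ends e).1) ≤ elen P t e :=
  edist_comm.trans_le (edist_ends_le he hm)

end LB

open SimpleGraph

theorem stmt11_general (k lk P t : ℕ) (hP : 1 ≤ P)
    (SA SB : Fin k → Bool) (i : Fin k) (hi : SA i = false ∨ SB i = false) :
    (LB.graph k lk P t SA SB).dist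
        (Sum.inl (LBBase.L' i)) (Sum.inl (LBBase.R' i)) ≤ 4 * P + 2 * t + 2 := by
  have fwd := @LB.edist_ends_le k lk P t SA SB
  have bwd := @LB.edist_ends_le' k lk P t SA SB
  have hcrC : 1 ≤ 2 * t + 1 := by omega
  refine ENat.toNat_le_of_le_natCast ?_
  rcases hi with hA | hB
  · -- ℓ'_i → ℓ_i → ℓ_{k+1} → r_{k+1} → r_k → r_i → r'_i
    refine (edist_le_add_of_le (bwd (e := .ll' i) trivial hP)
      (edist_le_add_of_le (fwd (e := .inA i) hA le_rfl)
      (edist_le_add_of_le (fwd (e := .crC) trivial hcrC)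
      (edist_le_add_of_le (bwd (e := .rkrk1) trivial hP)
      (edist_le_add_of_le (bwd (e := .rrk i) trivial hP)
        (fwd (e := .rr' i) trivial hP)))))).trans_eq ?_
    simp only [LB.elen]
    push_cast
    ring
  · -- ℓ'_i → ℓ_i → ℓ_k → ℓ_{k+1} → r_{k+1} → r_i → r'_i
    refine (edist_le_add_of_le (bwd (e := .ll' i) trivial hP)
      (edist_le_add_of_le (fwd (e := .llk i) trivial hP)
      (edist_le_add_of_le (fwd (e := .lklk1) trivial hP)
      (edist_le_add_of_le (fwd (e := .crC) trivial hcrC)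
      (edist_le_add_of_le (bwd (e := .inB i) hB le_rfl)
        (fwd (e := .rr' i) trivial hP)))))).trans_eq ?_
    simp only [LB.elen]
    push_cast
    ring

/-- In the lower-bound graph with input edges, if
`S_A[i] = 0` or `S_B[i] = 0`, then the distance between `ℓ'_i` and `r'_i`
is at most `4P + 2t + 2`. -/
theorem stmt11 (k lk P t : ℕ) (hk : k = 2 ^ lk) (hP : 1 ≤ P) (ht : 1 ≤ t)
    (SA SB : Fin k → Bool) (i : Fin k) (hi : SA i = false ∨ SB i = false) :
    (LB.graph k lk P t SA SB).dist
        (Sum.inl (LBBase.L' i)) (Sum.inl (LBBase.R' i)) ≤ 4 * P + 2 * t + 2 :=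
  stmt11_general k lk P t hP SA SB i hi
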